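/- arXiv:2107.11128 — 3 statements merged into one kernel-verified Lean document; each statement's English description precedes it below -/
import Mathlib

section
/- Let g = sl_{n+1}(ℂ) and let k ∈ ℚ be an admissible number for g. Let λ ∈ Pr̄_k and let μ ∈ W·λ (the dot-action orbit of λ). Then μ ∈ Pr̄_k if and only if μ is a dominant weight. -/
/-!
Combinatorial model for the paper "Admissible representations of simple affine
vertex algebras" for `g = sl_{n+1}(ℂ)`.

* `Weight n` models `h*` (linear functionals on diagonal matrices; every notion
  used below depends only on differences of coordinates, hence is well defined
  on the honest `h*`, the quotient by the constants).
* `Weyl n` is the Weyl group `S_{n+1}` of `sl_{n+1}`.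
* `Root n` is the root system: pairs `(i,j)`, `i ≠ j`, representing `ε_i - ε_j`.
-/

namespace PaperSL

noncomputable section

abbrev Weight (n : ℕ) := Fin (n + 1) → ℂ

abbrev Weyl (n : ℕ) := Equiv.Perm (Fin (n + 1))

structure Root (n : ℕ) where
  i : Fin (n + 1)
  j : Fin (n + 1)
  ne : i ≠ j

variable {n : ℕ}

/-- the pairing `⟨μ, α^∨⟩` for `α = ε_i - ε_j`. -/
def rpair (μ : Weight n) (α : Root n) : ℂ := μ α.i - μ α.j

/-- `α` is a positive root (w.r.t. the standard Borel subalgebra). -/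
def Root.IsPos (α : Root n) : Prop := α.i < α.j

/-- (a representative of) the Weyl vector `ρ`:  `⟨ρ, α^∨⟩ = 1` for simple `α`. -/
def rho (n : ℕ) : Weight n := fun i => -((i : ℕ) : ℂ)

/-- action of the Weyl group on weights. -/
def wAct (w : Weyl n) (μ : Weight n) : Weight n := fun i => μ (w⁻¹ i)

/-- action of the Weyl group on roots. -/
def rAct (w : Weyl n) (α : Root n) : Root n :=
  ⟨w α.i, w α.j, fun h => α.ne (w.injective h)⟩

/-- the dot action `w · λ = w(λ + ρ) - ρ`. -/
def dot (w : Weyl n) (μ : Weight n) : Weight n := wAct w (μ + rho n) - rho n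

/-- `z ∈ ℤ ⊆ ℂ`. -/
def IsInt (z : ℂ) : Prop := ∃ m : ℤ, z = (m : ℂ)

/-- `z ∈ ℕ₀ = {0,1,2,…} ⊆ ℂ`. -/
def IsNat (z : ℂ) : Prop := ∃ m : ℕ, z = (m : ℂ)

/-- `z ∈ ℕ = {1,2,…} ⊆ ℂ`. -/
def IsPosInt (z : ℂ) : Prop := ∃ m : ℕ, z = (m : ℂ) + 1

/-- `μ` is dominant: `⟨μ + ρ, α^∨⟩ ∉ -ℕ` for all positive roots `α`. -/
def IsDominant (μ : Weight n) : Prop :=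
  ∀ α : Root n, α.IsPos → ¬ IsPosInt (-(rpair (μ + rho n) α))

/-- the simple root `α_{r+1} = ε_r - ε_{r+1}` (`0`-indexed). -/
def simple (r : Fin n) : Root n :=
  ⟨r.castSucc, r.succ, by
    simp only [ne_eq, Fin.ext_iff, Fin.coe_castSucc, Fin.val_succ]
    omega⟩

/-- the simple reflection `s_{α_{r+1}}`, i.e. the transposition `(r, r+1)`. -/
def srefl (r : Fin n) : Weyl n := Equiv.swap r.castSucc r.succ

/-- (a representative of) the fundamental weight `ω_{r+1}` (`0`-indexed). -/
def fw (r : Fin n) : Weight n := fun i => if (i : ℕ) ≤ (r : ℕ) then 1 else 0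

/-- the root `-θ`, the negative of the highest root `θ = ε_0 - ε_n`. -/
def negTheta (hn : 0 < n) : Root n :=
  ⟨Fin.last n, 0, by
    simp only [ne_eq, Fin.ext_iff, Fin.val_last, Fin.val_zero]
    omega⟩

/-! Real affine roots `α + mδ` of `ŝl_{n+1}`, modeled as pairs `(α, m)`. -/

abbrev ARoot (n : ℕ) := Root n × ℤ

/-- positivity of real affine roots. -/
def ARoot.IsPos (β : ARoot n) : Prop := 0 < β.2 ∨ (β.2 = 0 ∧ β.1.IsPos)

/-- `⟨λ + kΛ₀ + ρ̂, (α + mδ)^∨⟩ = ⟨λ + ρ, α^∨⟩ + m(k + h^∨)`, `h^∨ = n + 1`. -/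
def apair (k : ℚ) (μ : Weight n) (β : ARoot n) : ℂ :=
  rpair (μ + rho n) β.1 + (β.2 : ℂ) * ((k : ℂ) + (n : ℂ) + 1)

/-- the integral root system `Δ̂(λ + kΛ₀)`. -/
def aIntegral (k : ℚ) (μ : Weight n) : Set (ARoot n) := {β | IsInt (apair k μ β)}

/-- `λ + kΛ₀` is regular dominant: `⟨λ + kΛ₀ + ρ̂, β^∨⟩ ∉ -ℕ₀` for positive `β`. -/
def IsRegDominantAff (k : ℚ) (μ : Weight n) : Prop :=
  ∀ β : ARoot n, ARoot.IsPos β → ¬ IsNat (-(apair k μ β))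

/-- a real affine root as a rational vector (finite part, coefficient of `δ`). -/
def ARoot.vec (β : ARoot n) : (Fin (n + 1) → ℚ) × ℚ :=
  (fun t => (if t = β.1.i then 1 else 0) - (if t = β.1.j then 1 else 0), (β.2 : ℚ))

/-- the `ℚ`-span of `Δ̂(λ + kΛ₀)` contains all real affine roots. -/
def SpanFull (k : ℚ) (μ : Weight n) : Prop :=
  ∀ β : ARoot n, ARoot.vec β ∈ Submodule.span ℚ (ARoot.vec '' aIntegral k μ)

/-- `λ + kΛ₀` is an admissible weight (Kac–Wakimoto). -/
def IsAdmissibleWeight (k : ℚ) (μ : Weight n) : Prop :=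
  IsRegDominantAff k μ ∧ SpanFull k μ

/-- the action of `w t_{-η}` (a general element of the extended affine Weyl group
`W̃ = W ⋉ P^∨`) on real affine roots: `w t_{-η}(α + mδ) = w(α) + (m + (η,α))δ`.
A coweight `η ∈ P^∨` is modeled by an integer-valued function on coordinates. -/
def aAct (w : Weyl n) (η : Fin (n + 1) → ℤ) (β : ARoot n) : ARoot n :=
  (rAct w β.1, β.2 + (η β.1.i - η β.1.j))

/-- `Pr̄_k`: the projections to `h*` of the admissible weights `λ` of level `k`
with `Δ̂(λ) = y(Δ̂(kΛ₀))` for some `y ∈ W̃`. -/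
def Pr (n : ℕ) (k : ℚ) : Set (Weight n) :=
  {μ | IsAdmissibleWeight k μ ∧
    ∃ (w : Weyl n) (η : Fin (n + 1) → ℤ),
      aIntegral k μ = aAct w η '' aIntegral k (0 : Weight n)}

/-- `k` is an admissible number for `sl_{n+1}` with numerator `p`, denominator `q`:
`k + n + 1 = p/q`, `p,q ∈ ℕ`, `(p,q) = 1`, `p ≥ n+1`. -/
def IsAdmissibleNum (n : ℕ) (k : ℚ) (p q : ℕ) : Prop :=
  0 < p ∧ 0 < q ∧ Nat.Coprime p q ∧ n + 1 ≤ p ∧ (k + (n : ℚ) + 1) = (p : ℚ) / (q : ℚ)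

/-- `k` is an admissible number for `sl_{n+1}`. -/
def IsAdmissible (n : ℕ) (k : ℚ) : Prop := ∃ p q : ℕ, IsAdmissibleNum n k p q

/-- the integral root system `Δ(λ) = {α ∈ Δ : ⟨λ+ρ, α^∨⟩ ∈ ℤ}`. -/
def fIntegral (μ : Weight n) : Set (Root n) := {α | IsInt (rpair (μ + rho n) α)}

/-- the root subsystem `Δ_Σ` generated by a subset `Σ` of the simple roots
(a standard parabolic subalgebra is modeled by its set `Σ` of simple roots). -/
def DeltaSigma (Sg : Finset (Fin n)) : Set (Root n) :=
  {α | ∀ t : Fin n, min (α.i : ℕ) (α.j : ℕ) ≤ (t : ℕ) →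
    (t : ℕ) < max (α.i : ℕ) (α.j : ℕ) → t ∈ Sg}

/-- `W^λ` resp. `W^p`: `{w ∈ W : Δ₊ ∩ w(-Δ₊) ⊆ Δ₊ \ S}` for `S = Δ(λ)` resp. `Δ_Σ`. -/
def WSet (S : Set (Root n)) : Set (Weyl n) :=
  {w | ∀ α : Root n, α.IsPos → ¬ (rAct w⁻¹ α).IsPos → α ∉ S}

/-- `Pr̄_{k,ℤ} = {λ : ⟨λ, α_i^∨⟩ ∈ ℕ₀ ∀ i, ⟨λ, θ^∨⟩ ≤ p - n - 1}`, `p = (k+n+1)q`. -/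
def PrZ (n p : ℕ) : Set (Weight n) :=
  {μ | (∀ r : Fin n, IsNat (rpair μ (simple r))) ∧
    ∃ m : ℕ, μ 0 - μ (Fin.last n) = (m : ℂ) ∧ m + (n + 1) ≤ p}

/-- `(η, α)` for a coweight `η` and a root `α`. -/
def cpair (η : Fin (n + 1) → ℤ) (α : Root n) : ℤ := η α.i - η α.j

/-- `η ∈ P₊^∨` (dominant coweight). -/
def IsDomCoweight (η : Fin (n + 1) → ℤ) : Prop := ∀ r : Fin n, η r.succ ≤ η r.castSucc

/-- `(η, θ)` for the highest root `θ`. -/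
def cTheta (η : Fin (n + 1) → ℤ) : ℤ := η 0 - η (Fin.last n)

/-- `Π^η = {α ∈ Π : (η, α) = 0}`. -/
def PiEta (η : Fin (n + 1) → ℤ) : Finset (Fin n) :=
  Finset.univ.filter fun r => η r.castSucc = η r.succ

/-- a coweight regarded as an element of `h*` (via the normalized bilinear form). -/
def coToW (η : Fin (n + 1) → ℤ) : Weight n := fun i => ((η i : ℤ) : ℂ)

/-- `Λ_k(p) = {λ - (k+n+1)η : λ ∈ Pr̄_{k,ℤ}, η ∈ P₊^∨, (η,θ) ≤ q-1, Π^η = Σ_p}`. -/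
def Lam (n : ℕ) (k : ℚ) (p q : ℕ) (Sg : Finset (Fin n)) : Set (Weight n) :=
  {ν | ∃ μ ∈ PrZ n p, ∃ η : Fin (n + 1) → ℤ,
    IsDomCoweight η ∧ cTheta η ≤ (q : ℤ) - 1 ∧ PiEta η = Sg ∧
    ν = μ - ((k : ℂ) + (n : ℂ) + 1) • coToW η}

/-- the saturation of a set of weights under the dot action of `W`; the image of
`S` in the quotient `[Pr̄_k] = Pr̄_k/∼` is faithfully encoded by `dotOrbitSat S`. -/
def dotOrbitSat (S : Set (Weight n)) : Set (Weight n) :=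
  {ν | ∃ μ ∈ S, ∃ w : Weyl n, ν = dot w μ}

/-- the set `{α_1, …, α_n, -θ}`. -/
def extSet (hn : 0 < n) : Set (Root n) := Set.range simple ∪ {negTheta hn}

/-- `w = w_j`: the unique element of `W` preserving `{α_1,…,α_n,-θ}` with
`w(-θ) = α_j` (here `j : Fin n` is `0`-indexed). -/
def IsWj (hn : 0 < n) (w : Weyl n) (j : Fin n) : Prop :=
  rAct w '' extSet hn = extSet hn ∧ rAct w (negTheta hn) = simple j

/-- the subgroup `W₊ = ⟨w_1, …, w_n⟩` of `W`. -/
def WPlus (hn : 0 < n) : Subgroup (Weyl n) :=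
  Subgroup.closure {w | ∃ j : Fin n, IsWj hn w j}

/-- `w(Σ_p) = Σ_p` as sets of simple roots. -/
def fixesSigma (w : Weyl n) (Sg : Finset (Fin n)) : Prop :=
  rAct w '' (simple '' (Sg : Set (Fin n))) = simple '' (Sg : Set (Fin n))

/-- `W₊^p = {w ∈ W₊ : w(Σ_p) = Σ_p}`. -/
def WPlusP (hn : 0 < n) (Sg : Finset (Fin n)) : Set (Weyl n) :=
  {w | w ∈ WPlus hn ∧ fixesSigma w Sg}

/-- `p_{Σ₁} ∼ p_{Σ₂}`: the root subsystems `Δ_{Σ₁}` and `Δ_{Σ₂}` are `W`-conjugate. -/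
def DeltaConj (S1 S2 : Finset (Fin n)) : Prop :=
  ∃ w : Weyl n, DeltaSigma S1 = rAct w '' DeltaSigma S2

/-! Partitions (as multisets), Richardson orbits. -/

/-- the cut positions of the Levi blocks of the parabolic with simple roots `Σ`. -/
def cuts (Sg : Finset (Fin n)) : Finset ℕ :=
  insert 0 (insert (n + 1) ((Finset.univ \ Sg).image fun r : Fin n => (r : ℕ) + 1))

/-- the block sizes of the Levi subalgebra of the parabolic with simple roots `Σ`
(a partition of `n+1`). -/
def blockSizes (Sg : Finset (Fin n)) : Multiset ℕ :=
  (((((cuts Sg).sort (· ≤ ·)).zip ((cuts Sg).sort (· ≤ ·)).tail).map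
    fun ab => ab.2 - ab.1 : List ℕ) : Multiset ℕ)

/-- the transpose of a partition given as a multiset. -/
def transposeM (μ : Multiset ℕ) : Multiset ℕ :=
  Multiset.filter (fun c => 0 < c)
    (((List.range μ.sum).map fun j =>
      Multiset.card (μ.filter fun x => j + 1 ≤ x) : List ℕ) : Multiset ℕ)

/-- the partition of the Richardson orbit `O_{p_Σ}` attached to the standard
parabolic subalgebra with simple roots `Σ`: the transpose of the Levi block sizes. -/
def richardson (Sg : Finset (Fin n)) : Multiset ℕ := transposeM (blockSizes Sg)

/-- the set `Σ_μ` of simple roots of the standard parabolic subalgebra `p_μ`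
attached to a partition `μ` of `n+1`: the complement of the partial sums of the
(decreasingly ordered) parts. -/
def sigmaOfPartition (μ : Multiset ℕ) : Finset (Fin n) :=
  Finset.univ.filter fun r : Fin n =>
    ((r : ℕ) + 1) ∉ List.scanl (· + ·) 0 (μ.sort (· ≤ ·)).reverse

/-- the length function on `W = S_{n+1}` (number of inversions). -/
def len (w : Weyl n) : ℕ :=
  (Finset.univ.filter fun pr : Fin (n + 1) × Fin (n + 1) =>
    pr.1 < pr.2 ∧ w pr.2 < w pr.1).card

/-- the coefficients in `w_j(∑ λ_i ω_i) = ∑_{i<j} λ_{n+1+i-j} ω_i - (∑ λ_i) ω_j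
+ ∑_{i>j} λ_{i-j} ω_i` (all `0`-indexed). -/
def twCoeff (lamb : Fin n → ℂ) (j i : Fin n) : ℂ :=
  if _ : (i : ℕ) < (j : ℕ) then
    lamb ⟨n + (i : ℕ) - (j : ℕ), by have := j.isLt; omega⟩
  else if (i : ℕ) = (j : ℕ) then -(∑ t, lamb t)
  else lamb ⟨(i : ℕ) - (j : ℕ) - 1, by have := i.isLt; omega⟩

/-! The dot action of `w ∈ W` turns the affine pairing at `α + mδ` into the pairing at
`w⁻¹α + mδ`. So it transports the integral root system by `w` (preserving the span
condition and the shape `y(Δ̂(kΛ₀))`, with `y` replaced by `w y`), and it permutes the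
positive affine roots with `m > 0`. Regular dominance can therefore only fail at the
finite roots, where it amounts to dominance plus non-vanishing of the pairing; the
latter is inherited from `λ`, whose pairing vanishes at no real affine root. -/

def Root.neg (α : Root n) : Root n := ⟨α.j, α.i, α.ne.symm⟩

lemma rAct_mul (w w' : Weyl n) (α : Root n) : rAct (w * w') α = rAct w (rAct w' α) := rfl

lemma rAct_one (α : Root n) : rAct 1 α = α := rfl

lemma aAct_zero_apply (w : Weyl n) (β : ARoot n) : aAct w 0 β = (rAct w β.1, β.2) := by
  simp [aAct]

lemma aAct_zero_aAct (w w' : Weyl n) (η : Fin (n + 1) → ℤ) (β : ARoot n) :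
    aAct w 0 (aAct w' η β) = aAct (w * w') η β := by
  simp [aAct, rAct_mul]

lemma aAct_zero_inv_aAct_zero (w : Weyl n) (β : ARoot n) : aAct w⁻¹ 0 (aAct w 0 β) = β := by
  rw [aAct_zero_aAct, inv_mul_cancel, aAct_zero_apply, rAct_one]

lemma aAct_zero_aAct_zero_inv (w : Weyl n) (β : ARoot n) : aAct w 0 (aAct w⁻¹ 0 β) = β := by
  simpa using aAct_zero_inv_aAct_zero w⁻¹ β

lemma apair_zero (k : ℚ) (μ : Weight n) (α : Root n) :
    apair k μ (α, 0) = rpair (μ + rho n) α := by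
  simp [apair]

lemma apair_neg (k : ℚ) (μ : Weight n) (α : Root n) (m : ℤ) :
    apair k μ (α.neg, -m) = -apair k μ (α, m) := by
  simp only [apair, rpair, Root.neg, Int.cast_neg]
  ring

lemma apair_dot (k : ℚ) (w : Weyl n) (μ : Weight n) (β : ARoot n) :
    apair k (dot w μ) β = apair k μ (aAct w⁻¹ 0 β) := by
  simp only [aAct_zero_apply, apair, rpair, dot, wAct, rAct, Pi.add_apply, Pi.sub_apply]
  ring

lemma aIntegral_dot (k : ℚ) (w : Weyl n) (μ : Weight n) :
    aIntegral k (dot w μ) = aAct w 0 '' aIntegral k μ := by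
  ext β
  refine ⟨fun h => ⟨aAct w⁻¹ 0 β, ?_, aAct_zero_aAct_zero_inv w β⟩, ?_⟩
  · simpa only [aIntegral, Set.mem_ofPred_eq, apair_dot] using h
  · rintro ⟨γ, hγ, rfl⟩
    simpa only [aIntegral, Set.mem_ofPred_eq, apair_dot, aAct_zero_inv_aAct_zero] using hγ

lemma ARoot.isPos_or_isPos_neg (β : ARoot n) : β.IsPos ∨ ARoot.IsPos (β.1.neg, -β.2) := by
  obtain ⟨⟨i, j, hij⟩, m⟩ := β
  simp only [ARoot.IsPos, Root.IsPos, Root.neg]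
  rcases lt_trichotomy m 0 with hm | rfl | hm
  · exact Or.inr (Or.inl (by omega))
  · rcases lt_or_gt_of_ne hij with h | h
    · exact Or.inl (Or.inr ⟨rfl, h⟩)
    · exact Or.inr (Or.inr ⟨by simp, h⟩)
  · exact Or.inl (Or.inl hm)

lemma IsRegDominantAff.apair_ne_zero {k : ℚ} {μ : Weight n} (h : IsRegDominantAff k μ)
    (β : ARoot n) : apair k μ β ≠ 0 := by
  have hpos : ∀ γ : ARoot n, γ.IsPos → apair k μ γ ≠ 0 :=
    fun γ hγ h0 => h γ hγ ⟨0, by simp [h0]⟩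
  rcases β.isPos_or_isPos_neg with hβ | hβ
  · exact hpos β hβ
  · simpa [apair_neg] using hpos _ hβ

lemma IsRegDominantAff.isDominant {k : ℚ} {μ : Weight n} (h : IsRegDominantAff k μ) :
    IsDominant μ := by
  rintro α hα ⟨m, hm⟩
  exact h (α, 0) (Or.inr ⟨rfl, hα⟩) ⟨m + 1, by rw [apair_zero, hm]; push_cast; rfl⟩

lemma isRegDominantAff_dot {k : ℚ} {μ : Weight n} (h : IsRegDominantAff k μ) {w : Weyl n}
    (hdom : IsDominant (dot w μ)) : IsRegDominantAff k (dot w μ) := by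
  rintro ⟨α, m⟩ (hm | ⟨rfl, hα⟩) ⟨s, hs⟩
  · rw [apair_dot] at hs
    exact h _ (Or.inl (by simpa [aAct_zero_apply] using hm)) ⟨s, hs⟩
  · cases s with
    | zero => exact h.apair_ne_zero (aAct w⁻¹ 0 (α, 0)) (by simpa [apair_dot] using hs)
    | succ s => exact hdom α hα ⟨s, by rw [← apair_zero, hs]; push_cast; rfl⟩

lemma vec_aAct_zero (w : Weyl n) (β : ARoot n) :
    ARoot.vec (aAct w 0 β) =
      ((LinearMap.funLeft ℚ ℚ ⇑w⁻¹).prodMap LinearMap.id) (ARoot.vec β) := by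
  refine Prod.ext (funext fun t => ?_) (by simp [ARoot.vec, aAct_zero_apply])
  have h1 : ∀ x : Fin (n + 1), (t = w x) ↔ (w⁻¹ t = x) :=
    fun x => ⟨fun h => by subst h; simp, fun h => by rw [← h]; simp⟩
  simp only [ARoot.vec, aAct_zero_apply, rAct, LinearMap.prodMap_apply,
    LinearMap.funLeft_apply, h1]

lemma spanFull_dot {k : ℚ} {μ : Weight n} (h : SpanFull k μ) (w : Weyl n) :
    SpanFull k (dot w μ) := by
  intro β
  set L := (LinearMap.funLeft ℚ ℚ ⇑w⁻¹).prodMap (LinearMap.id : ℚ →ₗ[ℚ] ℚ)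
  have himage : ARoot.vec '' aIntegral k (dot w μ) = L '' (ARoot.vec '' aIntegral k μ) := by
    rw [aIntegral_dot, Set.image_image, Set.image_image]
    exact Set.image_congr fun γ _ => vec_aAct_zero w γ
  rw [himage, Submodule.span_image, ← aAct_zero_aAct_zero_inv w β, vec_aAct_zero]
  exact Submodule.mem_map_of_mem (h _)

lemma dot_mem_Pr {k : ℚ} {μ : Weight n} (hμ : μ ∈ Pr n k) {w : Weyl n}
    (hdom : IsDominant (dot w μ)) : dot w μ ∈ Pr n k := by
  obtain ⟨⟨hreg, hspan⟩, w₀, η₀, hI⟩ := hμ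
  refine ⟨⟨isRegDominantAff_dot hreg hdom, spanFull_dot hspan w⟩, w * w₀, η₀, ?_⟩
  rw [aIntegral_dot, hI, Set.image_image]
  exact Set.image_congr fun γ _ => aAct_zero_aAct w w₀ η₀ γ

theorem statement0_general (n : ℕ) (k : ℚ)
    (lam mu : Weight n) (hlam : lam ∈ Pr n k)
    (hmu : ∃ w : Weyl n, mu = dot w lam) :
    mu ∈ Pr n k ↔ IsDominant mu := by
  obtain ⟨w, rfl⟩ := hmu
  exact ⟨fun h => h.1.1.isDominant, dot_mem_Pr hlam⟩

/-- Let `g = sl_{n+1}(ℂ)` and `k ∈ ℚ` an admissible number for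
`g`.  Let `λ ∈ Pr̄_k` and `μ ∈ W·λ` (dot action orbit).  Then `μ ∈ Pr̄_k` if and
only if `μ` is a dominant weight. -/
theorem statement0 (n : ℕ) (hn : 0 < n) (k : ℚ) (hk : IsAdmissible n k)
    (lam mu : Weight n) (hlam : lam ∈ Pr n k)
    (hmu : ∃ w : Weyl n, mu = dot w lam) :
    mu ∈ Pr n k ↔ IsDominant mu :=
  statement0_general n k lam mu hlam hmu

end

end PaperSL
end

section
/- Let g = sl_{n+1}(ℂ), k an admissible number for g with denominator q, y ∈ W and η ∈ P^∨. Then the condition y t_{−η}(Δ̂(kΛ_0)_+) ⊆ Δ̂_+^re is equivalent to: 0 ≤ (η,α) ≤ q−1 whenever y(α) ∈ Δ_+ and 1 ≤ (η,α) ≤ q whenever y(α) ∈ Δ_−, for all α ∈ Δ_+. Moreover, if η ∈ P_+^∨ satisfies (η,θ) ≤ q−1, then y t_{−η}(Δ̂(kΛ_0)_+) ⊆ Δ̂_+^re holds if and only if y^{-1} ∈ W^{p_Σ} with Σ = {α ∈ Π : (η,α) = 0}. -/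
/-!
Combinatorial model for the paper "Admissible representations of simple affine
vertex algebras" for `g = sl_{n+1}(ℂ)`.

* `Weight n` models `h*` (linear functionals on diagonal matrices; every notion
  used below depends only on differences of coordinates, hence is well defined
  on the honest `h*`, the quotient by the constants).
* `Weyl n` is the Weyl group `S_{n+1}` of `sl_{n+1}`.
* `Root n` is the root system: pairs `(i,j)`, `i ≠ j`, representing `ε_i - ε_j`.
-/

namespace PaperSL

noncomputable section

variable {n : ℕ}

/-!
The positive roots of `Δ̂(kΛ₀)` are the `α + mδ` with `q ∣ m` and either `m > 0`, or `m = 0` and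
`α > 0`; the element `y t_{-η}` sends `α + mδ` to `y(α) + (m + (η,α))δ`, and positivity of an affine
root only improves as its `δ`-coefficient grows. Hence it suffices to test the roots `α` and
`-α + qδ` for `α ∈ Δ₊`, which give exactly the two-sided window for `(η,α)`. For dominant `η` with
`(η,θ) ≤ q - 1` the window holds automatically apart from `(η,α) ≠ 0` when `y(α) < 0`, and for such
`η` the positive roots with `(η,α) = 0` are exactly those of `Δ_Σ`.
-/

section Roots

instance : Neg (Root n) := ⟨fun α => ⟨α.j, α.i, α.ne.symm⟩⟩

lemma Root.neg_neg (α : Root n) : - -α = α := rfl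

lemma Root.isPos_neg_iff (α : Root n) : (-α).IsPos ↔ ¬ α.IsPos := by
  have h : α.j ≠ α.i := α.ne.symm
  change α.j < α.i ↔ ¬ α.i < α.j
  omega

lemma rAct_neg (w : Weyl n) (α : Root n) : rAct w (-α) = -rAct w α := rfl

lemma cpair_neg (η : Fin (n + 1) → ℤ) (α : Root n) : cpair η (-α) = -cpair η α :=
  (neg_sub _ _).symm

lemma ARoot.IsPos.of_le {β : ARoot n} (hβ : β.IsPos) {m : ℤ} (hm : β.2 ≤ m) :
    ARoot.IsPos (β.1, m) := by
  rcases hβ with h | ⟨h, hpos⟩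
  · exact Or.inl (h.trans_le hm)
  · rcases hm.lt_or_eq with hlt | heq
    · exact Or.inl (h ▸ hlt)
    · exact Or.inr ⟨heq ▸ h, hpos⟩

lemma aAct_mk (w : Weyl n) (η : Fin (n + 1) → ℤ) (α : Root n) (m : ℤ) :
    aAct w η (α, m) = (rAct w α, m + cpair η α) := rfl

end Roots

lemma mem_aIntegral_zero_iff {k : ℚ} {p q : ℕ} (hq : 0 < q) (hpq : Nat.Coprime p q)
    (hk : k + n + 1 = p / q) (β : ARoot n) :
    β ∈ aIntegral k (0 : Weight n) ↔ (q : ℤ) ∣ β.2 := by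
  have hq0 : (q : ℂ) ≠ 0 := Nat.cast_ne_zero.mpr hq.ne'
  have hkC : (k : ℂ) + n + 1 = p / q := by
    have h := congrArg ((↑) : ℚ → ℂ) hk
    push_cast at h
    exact h
  set d : ℤ := ((β.1.j : ℕ) : ℤ) - ((β.1.i : ℕ) : ℤ)
  have happ : apair k (0 : Weight n) β = (d + β.2 * p / q : ℂ) := by
    simp only [apair, rpair, rho, Pi.add_apply, Pi.zero_apply, zero_add, hkC, d]
    push_cast
    ring
  simp only [aIntegral, IsInt, Set.mem_ofPred_eq, happ]
  constructor
  · rintro ⟨t, ht⟩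
    have hz : β.2 * p = (t - d) * q := by
      field_simp at ht
      exact_mod_cast (by linear_combination ht : (β.2 * p : ℂ) = (t - d) * q)
    exact (Nat.isCoprime_iff_coprime.mpr hpq).symm.dvd_of_dvd_mul_right ⟨t - d, by rw [hz, mul_comm]⟩
  · rintro ⟨s, hs⟩
    refine ⟨d + s * p, ?_⟩
    rw [hs]
    push_cast
    field_simp

lemma window_iff {c q : ℤ} {P : Prop} :
    ((0 < c ∨ (c = 0 ∧ P)) ∧ (c < q ∨ (c = q ∧ ¬P))) ↔
      ((P → 0 ≤ c ∧ c ≤ q - 1) ∧ (¬P → 1 ≤ c ∧ c ≤ q)) := by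
  by_cases hP : P <;> simp only [hP, and_true, and_false, or_false, true_implies, false_implies,
    not_true, not_false_eq_true, true_and] <;> omega

section Window

variable (y : Weyl n) (η : Fin (n + 1) → ℤ)

lemma forall_dvd_isPos_aAct_iff {q : ℕ} (hq : 0 < q) :
    (∀ β : ARoot n, (q : ℤ) ∣ β.2 → β.IsPos → (aAct y η β).IsPos) ↔
      ∀ α : Root n, α.IsPos → (aAct y η (α, 0)).IsPos ∧ (aAct y η (-α, q)).IsPos := by
  constructor
  · intro H α hα
    exact ⟨H _ (dvd_zero _) (Or.inr ⟨rfl, hα⟩),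
      H _ dvd_rfl (Or.inl (show (0 : ℤ) < q by exact_mod_cast hq))⟩
  · rintro H ⟨α, m⟩ hdvd (hm | ⟨rfl, hα⟩)
    · have hqm : (q : ℤ) ≤ m := Int.le_of_dvd hm hdvd
      by_cases hα : α.IsPos
      · have hc : 0 ≤ cpair η α := by
          rcases (H α hα).1 with h | ⟨h, -⟩ <;> simp only [aAct_mk] at h <;> omega
        exact Or.inl (by simp only [aAct_mk]; omega)
      · have h := (H (-α) ((Root.isPos_neg_iff α).mpr hα)).2
        rw [Root.neg_neg] at h
        exact h.of_le (m := m + cpair η α) (by simp only [aAct_mk]; omega)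
    · exact (H α hα).1

lemma isPos_aAct_zero_iff (α : Root n) :
    (aAct y η (α, 0)).IsPos ↔ 0 < cpair η α ∨ (cpair η α = 0 ∧ (rAct y α).IsPos) := by
  simp only [aAct_mk, ARoot.IsPos, zero_add]

lemma isPos_aAct_neg_iff (α : Root n) (q : ℤ) :
    (aAct y η (-α, q)).IsPos ↔ cpair η α < q ∨ (cpair η α = q ∧ ¬ (rAct y α).IsPos) := by
  simp only [aAct_mk, ARoot.IsPos, cpair_neg, rAct_neg, Root.isPos_neg_iff, ← sub_eq_add_neg,
    sub_pos, sub_eq_zero, eq_comm (a := q)]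

lemma forall_isPos_aAct_iff {k : ℚ} {p q : ℕ} (hq : 0 < q) (hpq : Nat.Coprime p q)
    (hk : k + n + 1 = p / q) :
    (∀ β ∈ aIntegral k (0 : Weight n), β.IsPos → (aAct y η β).IsPos) ↔
      ∀ α : Root n, α.IsPos →
        ((rAct y α).IsPos → 0 ≤ cpair η α ∧ cpair η α ≤ (q : ℤ) - 1) ∧
        (¬ (rAct y α).IsPos → 1 ≤ cpair η α ∧ cpair η α ≤ (q : ℤ)) := by
  simp only [mem_aIntegral_zero_iff hq hpq hk]
  rw [forall_dvd_isPos_aAct_iff y η hq]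
  refine forall₂_congr fun α _ => ?_
  rw [isPos_aAct_zero_iff, isPos_aAct_neg_iff, window_iff]

end Window

lemma Fin.eq_of_forall_castSucc_eq_succ {α : Type*} {n : ℕ} {f : Fin (n + 1) → α}
    {a b : Fin (n + 1)} (hab : a ≤ b)
    (h : ∀ t : Fin n, a ≤ t.castSucc → t.succ ≤ b → f t.castSucc = f t.succ) : f a = f b := by
  induction b using Fin.induction with
  | zero => rw [Fin.le_zero_iff.mp hab]
  | succ t ih =>
    rcases eq_or_ne a t.succ with rfl | hne
    · rfl
    · have hat : a ≤ t.castSucc := Fin.le_castSucc_iff.mpr (lt_of_le_of_ne hab hne)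
      rw [ih hat fun s hs hst => h s hs (hst.trans (Fin.castSucc_le_succ t)), h t hat le_rfl]

section Dominant

variable {η : Fin (n + 1) → ℤ}

lemma cpair_nonneg_of_isDomCoweight (hη : IsDomCoweight η) {α : Root n} (hα : α.IsPos) :
    0 ≤ cpair η α :=
  sub_nonneg.mpr (Fin.antitone_iff_succ_le.mpr hη hα.le)

lemma cpair_le_cTheta_of_isDomCoweight (hη : IsDomCoweight η) (α : Root n) :
    cpair η α ≤ cTheta η :=
  sub_le_sub (Fin.antitone_iff_succ_le.mpr hη (Fin.zero_le _))
    (Fin.antitone_iff_succ_le.mpr hη (Fin.le_last _))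

lemma mem_deltaSigma_piEta_iff (hη : IsDomCoweight η) {α : Root n} (hα : α.IsPos) :
    α ∈ DeltaSigma (PiEta η) ↔ cpair η α = 0 := by
  have hij : (α.i : ℕ) < α.j := hα
  simp only [DeltaSigma, PiEta, Set.mem_ofPred_eq, Finset.mem_filter, Finset.mem_univ, true_and,
    min_eq_left hij.le, max_eq_right hij.le, cpair, sub_eq_zero]
  constructor
  · intro h
    exact Fin.eq_of_forall_castSucc_eq_succ hα.le fun t hit htj => h t hit (Nat.lt_of_succ_le htj)
  · intro heq t hit htj
    have hanti : Antitone η := Fin.antitone_iff_succ_le.mpr hη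
    have h1 : η t.castSucc ≤ η α.i := hanti (Fin.le_def.mpr hit)
    have h2 : η α.j ≤ η t.succ := hanti (Fin.le_def.mpr htj)
    exact le_antisymm (h1.trans (heq.trans_le h2)) (hη t)

lemma window_iff_inv_mem_wSet (y : Weyl n) {η : Fin (n + 1) → ℤ} {q : ℤ}
    (hη : IsDomCoweight η) (hθ : cTheta η ≤ q - 1) :
    (∀ α : Root n, α.IsPos →
        ((rAct y α).IsPos → 0 ≤ cpair η α ∧ cpair η α ≤ q - 1) ∧
        (¬ (rAct y α).IsPos → 1 ≤ cpair η α ∧ cpair η α ≤ q)) ↔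
      y⁻¹ ∈ WSet (DeltaSigma (PiEta η)) := by
  refine forall₂_congr fun α hα => ?_
  have h0 := cpair_nonneg_of_isDomCoweight hη hα
  have hθα := cpair_le_cTheta_of_isDomCoweight hη α
  rw [inv_inv, mem_deltaSigma_piEta_iff hη hα]
  by_cases hy : (rAct y α).IsPos <;>
    simp only [hy, true_implies, false_implies, not_true_eq_false, not_false_eq_true, and_true,
      true_and, iff_true] <;> omega

end Dominant

theorem statement3_general (n : ℕ) (k : ℚ) (p q : ℕ)
    (hk : IsAdmissibleNum n k p q) (y : Weyl n) (η : Fin (n + 1) → ℤ) :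
    ((∀ β ∈ aIntegral k (0 : Weight n), ARoot.IsPos β → ARoot.IsPos (aAct y η β)) ↔
      ∀ α : Root n, α.IsPos →
        ((rAct y α).IsPos → 0 ≤ cpair η α ∧ cpair η α ≤ (q : ℤ) - 1) ∧
        (¬ (rAct y α).IsPos → 1 ≤ cpair η α ∧ cpair η α ≤ (q : ℤ))) ∧
    (IsDomCoweight η → cTheta η ≤ (q : ℤ) - 1 →
      ((∀ β ∈ aIntegral k (0 : Weight n), ARoot.IsPos β → ARoot.IsPos (aAct y η β)) ↔
        y⁻¹ ∈ WSet (DeltaSigma (PiEta η)))) := by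
  obtain ⟨-, hq, hpq, -, hk⟩ := hk
  have window := forall_isPos_aAct_iff y η hq hpq hk
  exact ⟨window, fun hη hθ => window.trans (window_iff_inv_mem_wSet y hη hθ)⟩

/-- For `y ∈ W` and a coweight `η ∈ P^∨`, the condition
`y t_{-η}(Δ̂(kΛ₀)₊) ⊆ Δ̂₊^re` is equivalent to `0 ≤ (η,α) ≤ q-1` whenever
`y(α) ∈ Δ₊` and `1 ≤ (η,α) ≤ q` whenever `y(α) ∈ Δ₋`, for all `α ∈ Δ₊`.
Moreover, if `η ∈ P₊^∨` with `(η,θ) ≤ q-1`, the condition holds iff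
`y⁻¹ ∈ W^{p_Σ}` with `Σ = {α ∈ Π : (η,α) = 0}`. -/
theorem statement3 (n : ℕ) (hn : 0 < n) (k : ℚ) (p q : ℕ)
    (hk : IsAdmissibleNum n k p q) (y : Weyl n) (η : Fin (n + 1) → ℤ) :
    ((∀ β ∈ aIntegral k (0 : Weight n), ARoot.IsPos β → ARoot.IsPos (aAct y η β)) ↔
      ∀ α : Root n, α.IsPos →
        ((rAct y α).IsPos → 0 ≤ cpair η α ∧ cpair η α ≤ (q : ℤ) - 1) ∧
        (¬ (rAct y α).IsPos → 1 ≤ cpair η α ∧ cpair η α ≤ (q : ℤ))) ∧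
    (IsDomCoweight η → cTheta η ≤ (q : ℤ) - 1 →
      ((∀ β ∈ aIntegral k (0 : Weight n), ARoot.IsPos β → ARoot.IsPos (aAct y η β)) ↔
        y⁻¹ ∈ WSet (DeltaSigma (PiEta η)))) :=
  statement3_general n k p q hk y η

end

end PaperSL
end

section
/- Let g = sl_{n+1}(ℂ), let p be a standard parabolic subalgebra of g with simple-root set Σ_p ⊆ Π, and let j ∈ {1,…,n}. Then w_j ∈ W^p if and only if α_j ∉ Σ_p. Moreover, the elements of W_+^p preserve the set W^p under left multiplication: if w_j ∈ W_+^p and w ∈ W^p, then w_j w ∈ W^p. -/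
/-!
Combinatorial model for the paper "Admissible representations of simple affine
vertex algebras" for `g = sl_{n+1}(ℂ)`.

* `Weight n` models `h*` (linear functionals on diagonal matrices; every notion
  used below depends only on differences of coordinates, hence is well defined
  on the honest `h*`, the quotient by the constants).
* `Weyl n` is the Weyl group `S_{n+1}` of `sl_{n+1}`.
* `Root n` is the root system: pairs `(i,j)`, `i ≠ j`, representing `ε_i - ε_j`.
-/

namespace PaperSL

noncomputable section

variable {n : ℕ}

/-!
`w_j` permutes the set `{α_1, …, α_n, -θ}` of roots `ε_a - ε_{a+1}` with `a` read cyclically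
in `ℤ/(n+1)`, so as a permutation of the coordinates it is the cyclic rotation sending `-θ`
to `α_j`.
Since `Δ_Σ ∩ Δ₊` consists of sums of consecutive simple roots of `Σ`, `w ∈ W^p` just says that
`w⁻¹` increases across every simple root of `Σ`; the inverse rotation decreases across
`α_j` only. For the second part, `w_j⁻¹` permutes the simple roots of `Σ`, so the conditions
for `w_j w` are those for `w`.
-/

theorem Root.ext {α β : Root n} (hi : α.i = β.i) (hj : α.j = β.j) : α = β := by
  cases α; cases β; simp_all

theorem mem_extSet_iff (hn : 0 < n) (α : Root n) : α ∈ extSet hn ↔ α.j = α.i + 1 := by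
  constructor
  · rintro (⟨r, rfl⟩ | rfl)
    · exact Fin.coeSucc_eq_succ.symm
    · exact (Fin.last_add_one n).symm
  · intro h
    by_cases hi : α.i = Fin.last n
    · refine Or.inr (Root.ext hi ?_)
      rw [h, hi, Fin.last_add_one]
      rfl
    · obtain ⟨r, hr⟩ := Fin.eq_castSucc_of_ne_last hi
      refine Or.inl ⟨r, Root.ext hr ?_⟩
      rw [h, ← hr, Fin.coeSucc_eq_succ]
      rfl

theorem IsWj.apply_add_one {hn : 0 < n} {w : Weyl n} {j : Fin n} (h : IsWj hn w j)
    (a : Fin (n + 1)) : w (a + 1) = w a + 1 := by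
  have hne : a ≠ a + 1 := left_ne_add.mpr fun h1 => by
    rw [Fin.one_eq_zero_iff] at h1
    omega
  have hmem : (⟨a, a + 1, hne⟩ : Root n) ∈ extSet hn := (mem_extSet_iff hn _).mpr rfl
  exact (mem_extSet_iff hn _).mp (h.1 ▸ Set.mem_image_of_mem _ hmem)

theorem IsWj.apply_eq {hn : 0 < n} {w : Weyl n} {j : Fin n} (h : IsWj hn w j)
    (i : Fin (n + 1)) : w i = i + j.succ := by
  induction i using Fin.induction with
  | zero => rw [zero_add]; exact congrArg Root.j h.2
  | succ i ih => rw [← Fin.coeSucc_eq_succ, h.apply_add_one, ih, add_right_comm]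

theorem IsWj.inv_apply {hn : 0 < n} {w : Weyl n} {j : Fin n} (h : IsWj hn w j)
    (i : Fin (n + 1)) : w⁻¹ i = i - j.succ := by
  rw [Equiv.Perm.inv_eq_iff_eq, h.apply_eq, sub_add_cancel]

theorem simple_isPos (r : Fin n) : (simple r).IsPos := Fin.castSucc_lt_succ

theorem simple_mem_DeltaSigma {Sg : Finset (Fin n)} {r : Fin n} (hr : r ∈ Sg) :
    simple r ∈ DeltaSigma Sg := by
  intro t ht1 ht2
  simp only [simple, Fin.val_castSucc, Fin.val_succ] at ht1 ht2
  rwa [show t = r from Fin.ext (by omega)]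

theorem mem_WSet_DeltaSigma_iff {Sg : Finset (Fin n)} {w : Weyl n} :
    w ∈ WSet (DeltaSigma Sg) ↔ ∀ r ∈ Sg, w⁻¹ r.castSucc < w⁻¹ r.succ := by
  constructor
  · intro hw r hr
    by_contra hlt
    exact hw (simple r) (simple_isPos r) hlt (simple_mem_DeltaSigma hr)
  · intro hSg α hα hneg hαS
    refine hneg (strictMonoOn_of_lt_succ Set.ordConnected_Icc ?_ (Set.left_mem_Icc.mpr hα.le)
      (Set.right_mem_Icc.mpr hα.le) hα)
    intro a ha haI hsaI
    obtain ⟨r, rfl⟩ := Fin.eq_castSucc_of_ne_last (x := a) (by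
      rintro rfl
      exact ha fun b _ => Fin.le_last b)
    rw [Fin.orderSucc_castSucc] at hsaI ⊢
    have hαij : (α.i : ℕ) < α.j := hα
    have hir : (α.i : ℕ) ≤ r := haI.1
    have hrj : (r : ℕ) + 1 ≤ α.j := hsaI.2
    exact hSg r (hαS r (by omega) (by omega))

theorem sub_castSucc_lt_sub_succ_iff (k : Fin (n + 1)) (r : Fin n) :
    r.castSucc - k < r.succ - k ↔ r.succ ≠ k := by
  rw [← Fin.coeSucc_eq_succ, add_sub_right_comm, Fin.lt_add_one_iff, Fin.lt_last_iff_ne_last,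
    Ne, Ne, sub_eq_iff_eq_add, ← add_left_inj 1, add_right_comm, Fin.last_add_one, zero_add]

theorem IsWj.mem_WSet_DeltaSigma_iff {hn : 0 < n} {w : Weyl n} {j : Fin n} (h : IsWj hn w j)
    {Sg : Finset (Fin n)} : w ∈ WSet (DeltaSigma Sg) ↔ j ∉ Sg := by
  simp only [PaperSL.mem_WSet_DeltaSigma_iff, h.inv_apply, sub_castSucc_lt_sub_succ_iff,
    Ne, Fin.succ_inj]
  exact ⟨fun h' hj => h' j hj rfl, fun hj r hr hrj => hj (hrj ▸ hr)⟩

theorem mul_mem_WSet_DeltaSigma {Sg : Finset (Fin n)} {u w : Weyl n} (hu : fixesSigma u Sg)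
    (hw : w ∈ WSet (DeltaSigma Sg)) : u * w ∈ WSet (DeltaSigma Sg) := by
  rw [mem_WSet_DeltaSigma_iff] at hw ⊢
  intro r hr
  have hmem : simple r ∈ rAct u '' (simple '' (Sg : Set (Fin n))) := by
    rw [hu]; exact ⟨r, hr, rfl⟩
  obtain ⟨_, ⟨s, hs, rfl⟩, hsr⟩ := hmem
  have hi : u⁻¹ r.castSucc = s.castSucc := by
    rw [Equiv.Perm.inv_eq_iff_eq]; exact (congrArg Root.i hsr).symm
  have hj : u⁻¹ r.succ = s.succ := by
    rw [Equiv.Perm.inv_eq_iff_eq]; exact (congrArg Root.j hsr).symm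
  simpa only [mul_inv_rev, Equiv.Perm.mul_apply, hi, hj] using hw s hs

/-- For a standard parabolic subalgebra `p` with simple roots
`Σ_p ⊆ Π` and `j ∈ {1,…,n}`: `w_j ∈ W^p` iff `α_j ∉ Σ_p`; moreover left
multiplication by elements `w_j ∈ W₊^p` preserves `W^p`. -/
theorem statement4 (n : ℕ) (hn : 0 < n) (Sg : Finset (Fin n)) (j : Fin n)
    (wj : Weyl n) (hwj : IsWj hn wj j) :
    (wj ∈ WSet (DeltaSigma Sg) ↔ j ∉ Sg) ∧
    (fixesSigma wj Sg →
      ∀ w ∈ WSet (DeltaSigma Sg), wj * w ∈ WSet (DeltaSigma Sg)) :=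
  ⟨hwj.mem_WSet_DeltaSigma_iff, fun hfix _ hw => mul_mem_WSet_DeltaSigma hfix hw⟩

end

end PaperSL
end
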